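/- Let M be a deterministic single-tape Turing machine and consider a grid-shaped labeling (a function from the cells of an h × w grid to labels (t, h, s) with t ∈ Σ, h ∈ {Head, ⊥}, s ∈ Q ∪ {⊥}) satisfying: (i) the rightmost column has the head in state q₀ at the top cell and ⊥ elsewhere; (ii) every column contains exactly one Head-labeled cell; (iii) each pair of horizontally adjacent columns is related by one transition step of M (non-head cells unchanged, head cell and position updated per δ), or both encode the same halted configuration with a final state; and (iv) the leftmost column is in a final state. Then the sequence of columns, read right to left, equals the configuration history of M run on the input string written (between the boundary markers) in the rightmost column, and in particular w is at least the running time of M on that input. -/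
import Mathlib


/-- Direction of a head move of a single-tape Turing machine. -/
inductive TMDir | L | R | S
deriving DecidableEq

/-- A deterministic single-tape Turing machine `(Q, Γ, F, q₀, δ)`. -/
structure DetTM (Q Γ : Type) where
  F : Q → Prop
  q0 : Q
  δ : Q → Γ → Q × Γ × TMDir

/-- A configuration on a tape of length `h`. -/
structure TMConfig (Q Γ : Type) (h : ℕ) where
  tape : Fin h → Γ
  head : Fin h
  state : Q

/-- One computation step of `M`. -/
def TMStep {Q Γ : Type} (M : DetTM Q Γ) {h : ℕ} (c c' : TMConfig Q Γ h) : Prop :=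
  ¬ M.F c.state ∧
  c'.state = (M.δ c.state (c.tape c.head)).1 ∧
  (∀ i, i ≠ c.head → c'.tape i = c.tape i) ∧
  c'.tape c.head = (M.δ c.state (c.tape c.head)).2.1 ∧
  (match (M.δ c.state (c.tape c.head)).2.2 with
    | TMDir.L => (c'.head : ℕ) + 1 = (c.head : ℕ)
    | TMDir.R => (c'.head : ℕ) = (c.head : ℕ) + 1
    | TMDir.S => c'.head = c.head)

/-- The initial configuration of `M` on input tape `x`. -/
def TMInit {Q Γ : Type} (M : DetTM Q Γ) {h : ℕ} (hh : 0 < h) (x : Fin h → Γ) :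
    TMConfig Q Γ h :=
  ⟨x, ⟨0, hh⟩, M.q0⟩

/-- A labeled column (cells carry a tape symbol together with an optional head/state
marker) matches a configuration `c`: tape symbols agree, and the head marker with the
current state sits exactly at the head position. -/
def ColMatches {Q Γ : Type} {h : ℕ} [DecidableEq (Fin h)]
    (col : Fin h → Γ × Option Q) (c : TMConfig Q Γ h) : Prop :=
  (∀ i, (col i).1 = c.tape i) ∧
  (∀ i, (col i).2 = if i = c.head then some c.state else none)

/-- Two adjacent labeled columns are related by one transition step of `M`. -/
def ColStep {Q Γ : Type} (M : DetTM Q Γ) {h : ℕ} [DecidableEq (Fin h)]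
    (col col' : Fin h → Γ × Option Q) : Prop :=
  ∃ c c' : TMConfig Q Γ h, ColMatches col c ∧ ColMatches col' c' ∧ TMStep M c c'

/-- Two adjacent labeled columns both encode the same halted configuration with a
final state. -/
def ColHalted {Q Γ : Type} (M : DetTM Q Γ) {h : ℕ} [DecidableEq (Fin h)]
    (col col' : Fin h → Γ × Option Q) : Prop :=
  ∃ c : TMConfig Q Γ h, ColMatches col c ∧ M.F c.state ∧ col' = col

lemma colMatches_unique {Q Γ : Type} {h : ℕ} [DecidableEq (Fin h)]
    {col : Fin h → Γ × Option Q} {c c' : TMConfig Q Γ h}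
    (h1 : ColMatches col c) (h2 : ColMatches col c') : c = c' := by
  obtain ⟨t1, s1⟩ := h1
  obtain ⟨t2, s2⟩ := h2
  have hhead : c.head = c'.head := by
    by_contra hne
    have := (s1 c.head).symm.trans (s2 c.head)
    simp [hne] at this
  have hstate : c.state = c'.state := by
    have := (s1 c.head).symm.trans (s2 c.head)
    simpa [hhead] using this
  have htape : c.tape = c'.tape := funext fun i => (t1 i).symm.trans (t2 i)
  cases c; cases c'; simp_all

/-- Soundness of the local TM-transcript constraints: a grid labeling whose rightmost
column is the initial configuration, with exactly one head per column, adjacent columns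
related by a step of `M` (or equal and halted), and final leftmost column, must be the
configuration history of `M` run on the input written in the rightmost column; in
particular the width `w` is at least the running time of `M` on that input. -/
theorem stmt_15 {Q Γ : Type} (M : DetTM Q Γ) (h w : ℕ) (hh : 0 < h) (hw : 0 < w)
    (L : Fin w → Fin h → Γ × Option Q)
    (hinit : ColMatches (L ⟨0, hw⟩) (TMInit M hh (fun i => (L ⟨0, hw⟩ i).1)))
    (hone : ∀ t : Fin w, ∃! i : Fin h, (L t i).2 ≠ none)
    (hadj : ∀ t : Fin w, ∀ ht : (t : ℕ) + 1 < w,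
      ColStep M (L t) (L ⟨(t : ℕ) + 1, ht⟩) ∨ ColHalted M (L t) (L ⟨(t : ℕ) + 1, ht⟩))
    (hfinal : ∃ (i : Fin h) (q : Q),
      (L ⟨w - 1, Nat.sub_lt hw one_pos⟩ i).2 = some q ∧ M.F q) :
    ∃ T : ℕ, T < w ∧
      ∃ c : ℕ → TMConfig Q Γ h,
        c 0 = TMInit M hh (fun i => (L ⟨0, hw⟩ i).1) ∧
        (∀ u < T, TMStep M (c u) (c (u + 1))) ∧
        M.F (c T).state ∧
        (∀ u < T, ¬ M.F (c u).state) ∧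
        ∀ t : Fin w, ColMatches (L t) (c (min (t : ℕ) T)) := by
  classical
  have hex : ∀ t : Fin w, ∃ c : TMConfig Q Γ h, ColMatches (L t) c := by
    intro t
    obtain ⟨i, hi, huniq⟩ := hone t
    obtain ⟨q, hq⟩ := Option.ne_none_iff_exists'.mp hi
    refine ⟨⟨fun j => (L t j).1, i, q⟩, fun j => rfl, fun j => ?_⟩
    by_cases hji : j = i
    · simp [hji, hq]
    · simp only [if_neg hji]
      by_contra hne
      exact hji (huniq j hne)
  choose conf hconf using hex
  have hconf0 : conf ⟨0, hw⟩ = TMInit M hh (fun i => (L ⟨0, hw⟩ i).1) :=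
    colMatches_unique (hconf _) hinit
  set P : ℕ → Prop := fun t => ∃ ht : t < w, M.F (conf ⟨t, ht⟩).state with hP
  have hPlast : P (w - 1) := by
    obtain ⟨i, q, hq, hFq⟩ := hfinal
    refine ⟨Nat.sub_lt hw one_pos, ?_⟩
    obtain ⟨ht, hs⟩ := hconf ⟨w - 1, Nat.sub_lt hw one_pos⟩
    have h2 := hq.symm.trans (hs i)
    by_cases hih : i = (conf ⟨w - 1, Nat.sub_lt hw one_pos⟩).head
    · rw [if_pos hih] at h2
      rw [Option.some_inj] at h2
      exact h2 ▸ hFq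
    · rw [if_neg hih] at h2
      simp at h2
  have hexP : ∃ t, P t := ⟨w - 1, hPlast⟩
  set T := Nat.find hexP with hTdef
  obtain ⟨hTw, hFT⟩ : P T := Nat.find_spec hexP
  have hmin : ∀ u < T, ¬ P u := fun u hu => Nat.find_min hexP hu
  have hstep : ∀ u, u < T → ∀ (huw : u < w) (hu1w : u + 1 < w),
      TMStep M (conf ⟨u, huw⟩) (conf ⟨u + 1, hu1w⟩) := by
    intro u hu huw hu1w
    rcases hadj ⟨u, huw⟩ hu1w with ⟨a, b, ha, hb, hs⟩ | ⟨a, ha, hFa, _⟩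
    · have e1 : conf ⟨u, huw⟩ = a := colMatches_unique (hconf _) ha
      have e2 : conf ⟨u + 1, hu1w⟩ = b := colMatches_unique (hconf _) hb
      rw [e1, e2]; exact hs
    · refine absurd ⟨huw, ?_⟩ (hmin u hu)
      rw [colMatches_unique (hconf _) ha]; exact hFa
  have hhalt : ∀ n (hn : T + n < w), ColMatches (L ⟨T + n, hn⟩) (conf ⟨T, hTw⟩) := by
    intro n
    induction n with
    | zero => intro hn; exact hconf _
    | succ n ih =>
      intro hn
      have hn' : T + n < w := by omega
      have IH := ih hn'
      rcases hadj ⟨T + n, hn'⟩ hn with ⟨a, b, ha, hb, hs⟩ | ⟨a, ha, hFa, heq⟩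
      · exact absurd ((colMatches_unique IH ha) ▸ hFT) hs.1
      · have heq2 : L ⟨T + (n + 1), hn⟩ = L ⟨T + n, hn'⟩ := heq
        rw [heq2]; exact IH
  refine ⟨T, hTw, fun u => conf ⟨min u T, lt_of_le_of_lt (min_le_right u T) hTw⟩,
    ?_, ?_, ?_, ?_, ?_⟩
  · simp only [Nat.zero_min]
    exact hconf0
  · intro u hu
    simp only [Nat.min_eq_left hu.le, Nat.min_eq_left hu]
    exact hstep u hu _ _
  · simp only [Nat.min_self]
    exact hFT
  · intro u hu hF
    simp only [Nat.min_eq_left hu.le] at hF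
    exact hmin u hu ⟨lt_trans hu hTw, hF⟩
  · intro t
    rcases le_or_gt (t : ℕ) T with hle | hlt
    · simp only [Nat.min_eq_left hle]
      exact hconf t
    · simp only [Nat.min_eq_right hlt.le, Nat.min_self]
      have hw' : T + ((t : ℕ) - T) < w := by omega
      have h1 := hhalt _ hw'
      have he : (⟨T + ((t : ℕ) - T), hw'⟩ : Fin w) = t := Fin.ext (by simp; omega)
      rw [he] at h1
      exact h1
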